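/- For every natural number m, the set of values r(S) over all LR-strings S of length at most m equals the set of fractions ℓ/2^m for 1 ≤ ℓ ≤ 2^(m+1) − 1. -/

import Mathlib

open List

/-- `r`-value of an LR-string (`true` = R, `false` = L):
`r(ε) = 1`, `r(SL) = r(S) - 2^(-|SL|)`, `r(SR) = r(S) + 2^(-|SR|)`. -/
def rval (S : List Bool) : ℚ :=
  1 + ∑ i ∈ Finset.range S.length,
      (if S.getD i false then ((2:ℚ)^(i+1))⁻¹ else -((2:ℚ)^(i+1))⁻¹)

/-- Generalized strings: LR-strings plus the formal symbols `R⁻¹ = inv true`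
and `L⁻¹ = inv false`. -/
inductive Gen where
  | inv : Bool → Gen
  | str : List Bool → Gen
deriving DecidableEq

/-- Left parent: `P_L(ε) = R⁻¹`, `P_L(SL) = P_L(S)`, `P_L(SR) = S`. -/
def PL (S : List Bool) : Gen :=
  match S.reverse.dropWhile (· = false) with
  | [] => Gen.inv true
  | _ :: t => Gen.str t.reverse

/-- Right parent: `P_R(ε) = L⁻¹`, `P_R(SL) = S`, `P_R(SR) = P_R(S)`. -/
def PR (S : List Bool) : Gen :=
  match S.reverse.dropWhile (· = true) with
  | [] => Gen.inv false
  | _ :: t => Gen.str t.reverse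

/-- Extension of `r` to generalized strings: `r(R⁻¹) = 0`, `r(L⁻¹) = 2`. -/
def rg : Gen → ℚ
  | Gen.inv true => 0
  | Gen.inv false => 2
  | Gen.str S => rval S

/-- Length of a generalized string; the formal symbols have length `-1`. -/
def glen : Gen → ℤ
  | Gen.inv _ => -1
  | Gen.str S => S.length

/-- Position function: `N(ε) = 0`, `N(SL) = 2N(S)+1`, `N(SR) = 2N(S)+2`. -/
def posN (S : List Bool) : ℕ :=
  ∑ i ∈ Finset.range S.length, (if S.getD i false then 2 else 1) * 2^(S.length - 1 - i)

/-- The alternating-block string `S(k₀,…,k_m) = R^{k₀} L^{k₁} R^{k₂} ⋯`. -/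
def blockStr (ks : List ℕ) : List Bool :=
  (ks.zipIdx.map (fun p => List.replicate p.1 (decide (p.2 % 2 = 0)))).flatten

/-- Continued fraction `[q₀,…,q_m]`. -/
def cf : List ℚ → ℚ
  | [] => 0
  | [q] => q
  | q :: qs => q + (cf qs)⁻¹

/-- Admissible continued-fraction index sequences: `[q₀]` with `q₀ ≥ 1`, or
`[q₀,…,q_m]` with `m ≥ 1`, intermediate `qᵢ ≥ 1`, and `q_m ≥ 2`. -/
def CFAdmissible (qs : List ℕ) : Prop :=
  qs ≠ [] ∧ (qs.length = 1 → 1 ≤ qs.getD 0 0) ∧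
    (∀ i, 1 ≤ i → i + 1 < qs.length → 1 ≤ qs.getD i 0) ∧
    (2 ≤ qs.length → 2 ≤ qs.getLastD 0)

/-- The map `f([q₀,…,q_m]) = S(q₀,…,q_{m-1},q_m - 1)`. -/
def cfToStr (qs : List ℕ) : List Bool :=
  blockStr (qs.dropLast ++ [qs.getLastD 0 - 1])

/-! Prepending `L` or `R` to a string maps its value `x` to `x / 2` or `1 + x / 2`. Hence the values
of strings of length at most `m + 1` are `1` together with the halves of the values at length at most
`m`, shifted by `0` or `1`; at the level of numerators over `2 ^ (m + 1)` these three pieces are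
`ℓ < 2 ^ (m + 1)`, `ℓ = 2 ^ (m + 1)` and `ℓ > 2 ^ (m + 1)`. -/

lemma rval_cons (b : Bool) (S : List Bool) :
    rval (b :: S) = (if b then 1 else 0) + rval S / 2 := by
  have shift : ∀ c : Bool, ∀ i : ℕ,
      (if c then ((2:ℚ) ^ (i + 1 + 1))⁻¹ else -((2:ℚ) ^ (i + 1 + 1))⁻¹) =
        (if c then ((2:ℚ) ^ (i + 1))⁻¹ else -((2:ℚ) ^ (i + 1))⁻¹) / 2 := by
    intro c i
    cases c <;> simp only [Bool.false_eq_true, if_true, if_false, pow_succ _ (i + 1)] <;> ring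
  unfold rval
  rw [List.length_cons, Finset.sum_range_succ']
  simp only [List.getD_cons_succ, List.getD_cons_zero, shift, ← Finset.sum_div]
  cases b <;> simp only [Bool.false_eq_true, if_true, if_false] <;> ring

lemma exists_numerator_of_length_le (S : List Bool) (m : ℕ) (hS : S.length ≤ m) :
    ∃ l : ℕ, 1 ≤ l ∧ l < 2 ^ (m + 1) ∧ rval S = l / 2 ^ m := by
  induction S generalizing m with
  | nil => exact ⟨2 ^ m, Nat.one_le_two_pow, by simp [pow_succ], by simp [rval]⟩
  | cons b T ih =>
    obtain ⟨m, rfl⟩ : ∃ m', m = m' + 1 := ⟨m - 1, by rw [List.length_cons] at hS; omega⟩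
    obtain ⟨l, hl1, hl2, hT⟩ := ih m (by simpa using hS)
    have hpow : (2 : ℕ) ^ (m + 1 + 1) = 2 * 2 ^ (m + 1) := pow_succ' 2 _
    cases b
    · refine ⟨l, hl1, by omega, ?_⟩
      rw [rval_cons, hT]
      simp only [Bool.false_eq_true, if_false, pow_succ]
      ring
    · refine ⟨l + 2 ^ (m + 1), by omega, by omega, ?_⟩
      rw [rval_cons, hT]
      simp only [if_true]
      push_cast
      field_simp
      ring

lemma exists_rval_eq_of_lt (m l : ℕ) (hl1 : 1 ≤ l) (hl2 : l < 2 ^ (m + 1)) :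
    ∃ S : List Bool, S.length ≤ m ∧ rval S = l / 2 ^ m := by
  induction m generalizing l with
  | zero =>
    obtain rfl : l = 1 := by simp at hl2; omega
    exact ⟨[], le_rfl, by simp [rval]⟩
  | succ m ih =>
    have hpow : (2 : ℕ) ^ (m + 1 + 1) = 2 * 2 ^ (m + 1) := pow_succ' 2 _
    rcases lt_trichotomy l (2 ^ (m + 1)) with hlt | rfl | hgt
    · obtain ⟨T, hT, hrT⟩ := ih l hl1 hlt
      refine ⟨false :: T, by simpa using hT, ?_⟩
      rw [rval_cons, hrT]
      simp only [Bool.false_eq_true, if_false, pow_succ]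
      ring
    · exact ⟨[], Nat.zero_le _, by simp [rval]⟩
    · obtain ⟨T, hT, hrT⟩ := ih (l - 2 ^ (m + 1)) (by omega) (by omega)
      refine ⟨true :: T, by simpa using hT, ?_⟩
      rw [rval_cons, hrT, Nat.cast_sub hgt.le]
      simp only [if_true]
      push_cast
      field_simp
      ring

/-- Theorem 2.2(b): the `r`-values of strings of length at most `m` are exactly
the fractions `ℓ/2^m` for `1 ≤ ℓ ≤ 2^(m+1) - 1`. -/
theorem stmt1 (m : ℕ) :
    {x : ℚ | ∃ S : List Bool, S.length ≤ m ∧ rval S = x} =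
      {x : ℚ | ∃ l : ℕ, 1 ≤ l ∧ l ≤ 2 ^ (m + 1) - 1 ∧ x = (l : ℚ) / 2 ^ m} := by
  have hpos : 0 < 2 ^ (m + 1) := by positivity
  ext x
  constructor
  · rintro ⟨S, hS, rfl⟩
    obtain ⟨l, hl1, hl2, hr⟩ := exists_numerator_of_length_le S m hS
    exact ⟨l, hl1, by omega, hr⟩
  · rintro ⟨l, hl1, hl2, rfl⟩
    exact exists_rval_eq_of_lt m l hl1 (by omega)
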